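/- Let A be a unital C*-algebra, B a commutative unital C*-algebra, and φ : A → B a positive unital linear map. Then for every convex function f on an open interval I and every self-adjoint a ∈ A with spectrum contained in I, f(φ(a)) ≤ φ(f(a)). -/
import Mathlib


open scoped ComplexOrder

/-- A convex function on an open set of reals admits a supporting line at every point. -/
lemma jensen_aux_exists_supporting_slope {I : Set ℝ} (hI_open : IsOpen I) {f : ℝ → ℝ}
    (hf : ConvexOn ℝ I f) {t₀ : ℝ} (ht₀ : t₀ ∈ I) :
    ∃ c : ℝ, ∀ t ∈ I, f t₀ + c * (t - t₀) ≤ f t := by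
  obtain ⟨ε, hε, hball⟩ := Metric.isOpen_iff.mp hI_open t₀ ht₀
  have hsI : t₀ - ε / 2 ∈ I := hball (by rw [Metric.mem_ball, Real.dist_eq]; rw [abs_lt]; constructor <;> linarith)
  have huI : t₀ + ε / 2 ∈ I := hball (by rw [Metric.mem_ball, Real.dist_eq]; rw [abs_lt]; constructor <;> linarith)
  set S : Set ℝ := (fun t => (f t₀ - f t) / (t₀ - t)) '' (I ∩ Set.Iio t₀) with hS
  have hSne : S.Nonempty := ⟨_, ⟨t₀ - ε / 2, ⟨hsI, by simp; linarith⟩, rfl⟩⟩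
  have hub : ∀ t ∈ I ∩ Set.Iio t₀, ∀ u ∈ I ∩ Set.Ioi t₀,
      (f t₀ - f t) / (t₀ - t) ≤ (f u - f t₀) / (u - t₀) := fun t ht u hu =>
    hf.slope_mono_adjacent ht.1 hu.1 ht.2 hu.2
  have hbdd : BddAbove S := ⟨(f (t₀ + ε / 2) - f t₀) / (t₀ + ε / 2 - t₀), by
    rintro y ⟨t, ht, rfl⟩
    exact hub t ht _ ⟨huI, by simp; linarith⟩⟩
  refine ⟨sSup S, fun t ht => ?_⟩
  rcases lt_trichotomy t t₀ with h | h | h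
  · have hle : (f t₀ - f t) / (t₀ - t) ≤ sSup S := le_csSup hbdd ⟨t, ⟨ht, h⟩, rfl⟩
    have h1 : f t₀ - f t ≤ sSup S * (t₀ - t) := (div_le_iff₀ (by linarith)).mp hle
    have h2 : sSup S * (t - t₀) = -(sSup S * (t₀ - t)) := by ring
    linarith
  · simp [h]
  · have hle : sSup S ≤ (f t - f t₀) / (t - t₀) := csSup_le hSne <| by
      rintro y ⟨s, hs, rfl⟩
      exact hub s hs t ⟨ht, h⟩
    have h1 : sSup S * (t - t₀) ≤ f t - f t₀ := by
      rw [← le_div_iff₀ (by linarith)]; exact hle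
    linarith

/-- Jensen's inequality for a positive unital map `φ : A → B` into a *commutative*
unital C*-algebra `B`, for an arbitrary convex function `f` on an open interval `I`. -/
theorem jensen_commutative_codomain {A B : Type*}
    [CStarAlgebra A] [PartialOrder A] [StarOrderedRing A]
    [CommCStarAlgebra B] [PartialOrder B] [StarOrderedRing B]
    (φ : A →ₗ[ℂ] B) (hφ_pos : ∀ x : A, 0 ≤ x → 0 ≤ φ x) (hφ_unital : φ 1 = 1)
    (I : Set ℝ) (hI_open : IsOpen I) (hI_conn : I.OrdConnected)
    (f : ℝ → ℝ) (hf : ConvexOn ℝ I f)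
    (a : A) (ha : IsSelfAdjoint a) (hspec : spectrum ℝ a ⊆ I) :
    cfc f (φ a) ≤ φ (cfc f a) := by
  obtain hB | hB := subsingleton_or_nontrivial B
  · exact le_of_eq (Subsingleton.elim _ _)
  have hA : Nontrivial A := by
    rcases subsingleton_or_nontrivial A with h | h
    · refine absurd ?_ (one_ne_zero (α := B))
      rw [← hφ_unital, Subsingleton.elim (1 : A) 0, map_zero]
    · exact h
  -- φ preserves selfadjointness and order, and fixes real scalars
  have hφ_star : ∀ x : A, IsSelfAdjoint x → IsSelfAdjoint (φ x) := by
    intro x hx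
    rw [← CFC.posPart_sub_negPart x hx, map_sub]
    exact (IsSelfAdjoint.of_nonneg (hφ_pos _ (CFC.posPart_nonneg x))).sub
      (IsSelfAdjoint.of_nonneg (hφ_pos _ (CFC.negPart_nonneg x)))
  have hφ_mono : ∀ x y : A, x ≤ y → φ x ≤ φ y := by
    intro x y h
    have := hφ_pos _ (sub_nonneg.mpr h)
    rw [map_sub] at this
    exact sub_nonneg.mp this
  have hφ_alg : ∀ r : ℝ, φ (algebraMap ℝ A r) = algebraMap ℝ B r := by
    intro r
    rw [IsScalarTower.algebraMap_apply ℝ ℂ A, IsScalarTower.algebraMap_apply ℝ ℂ B,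
      Algebra.algebraMap_eq_smul_one, Algebra.algebraMap_eq_smul_one (A := B),
      map_smul, hφ_unital]
  have hφ_rsmul : ∀ (r : ℝ) (x : A), φ (r • x) = r • φ x := by
    intro r x
    rw [← IsScalarTower.algebraMap_smul ℂ r x, map_smul, IsScalarTower.algebraMap_smul]
  -- spectrum bounds
  have hcpct : IsCompact (spectrum ℝ a) := isCompact_iff_compactSpace.mpr inferInstance
  have hne : (spectrum ℝ a).Nonempty := CFC.spectrum_nonempty (R := ℝ) a ha
  set m := sInf (spectrum ℝ a) with hm_def
  set M := sSup (spectrum ℝ a) with hM_def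
  have hm : m ∈ spectrum ℝ a := hcpct.sInf_mem hne
  have hM : M ∈ spectrum ℝ a := hcpct.sSup_mem hne
  have hIcc : Set.Icc m M ⊆ I := hI_conn.out (hspec hm) (hspec hM)
  have h_le_M : a ≤ algebraMap ℝ A M :=
    (le_algebraMap_iff_spectrum_le (a := a) ha).mpr fun x hx => le_csSup hcpct.bddAbove hx
  have h_m_le : algebraMap ℝ A m ≤ a :=
    (algebraMap_le_iff_le_spectrum (a := a) ha).mpr fun x hx => csInf_le hcpct.bddBelow hx
  set b := φ a with hb_def
  have hb : IsSelfAdjoint b := hφ_star a ha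
  have hbM : b ≤ algebraMap ℝ B M := by rw [← hφ_alg]; exact hφ_mono _ _ h_le_M
  have hbm : algebraMap ℝ B m ≤ b := by rw [← hφ_alg]; exact hφ_mono _ _ h_m_le
  have hspec_b : spectrum ℝ b ⊆ I := fun x hx => hIcc
    ⟨(algebraMap_le_iff_le_spectrum (a := b) hb).mp hbm x hx, (le_algebraMap_iff_spectrum_le (a := b) hb).mp hbM x hx⟩
  have hf_cont : ContinuousOn f I := hf.continuousOn hI_open
  have hfa_cont : ContinuousOn f (spectrum ℝ a) := hf_cont.mono hspec
  have hfb_cont : ContinuousOn f (spectrum ℝ b) := hf_cont.mono hspec_b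
  have hfa : IsSelfAdjoint (cfc f a) := cfc_predicate f a
  have hfb : IsSelfAdjoint (cfc f b) := cfc_predicate f b
  have hd : IsSelfAdjoint (φ (cfc f a) - cfc f b) := (hφ_star _ hfa).sub hfb
  rw [← sub_nonneg]
  rw [StarOrderedRing.nonneg_iff_spectrum_nonneg (R := ℝ) _ hd]
  intro x hx
  have hxc : (x : ℂ) ∈ spectrum ℂ (φ (cfc f a) - cfc f b) := by
    have := spectrum.algebraMap_mem ℂ hx
    simpa using this
  obtain ⟨χ, hχ⟩ := WeakDual.CharacterSpace.mem_spectrum_iff_exists.mp hxc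
  have hχb_mem : χ b ∈ spectrum ℂ b :=
    WeakDual.CharacterSpace.mem_spectrum_iff_exists.mpr ⟨χ, rfl⟩
  have hχb_re : χ b = ((χ b).re : ℂ) := hb.mem_spectrum_eq_re hχb_mem
  set t₀ := (χ b).re with ht₀_def
  have ht₀_mem : t₀ ∈ spectrum ℝ b := by
    apply spectrum.of_algebraMap_mem (S := ℂ)
    rw [show algebraMap ℝ ℂ t₀ = ((t₀ : ℝ) : ℂ) from rfl, ← hχb_re]
    exact hχb_mem
  have ht₀I : t₀ ∈ I := hspec_b ht₀_mem
  obtain ⟨c, hc⟩ := jensen_aux_exists_supporting_slope hI_open hf ht₀I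
  -- the affine minorant evaluated in A
  have hga : cfc (fun t : ℝ => (f t₀ - c * t₀) + c * t) a
      = algebraMap ℝ A (f t₀ - c * t₀) + c • a := by
    rw [cfc_add a _ _ (continuousOn_const) (by fun_prop), cfc_const _ a ha,
      cfc_const_mul_id c a ha]
  have hgle : cfc (fun t : ℝ => (f t₀ - c * t₀) + c * t) a ≤ cfc f a := by
    refine cfc_mono (fun t ht => ?_) (by fun_prop) hfa_cont
    have := hc t (hspec ht)
    linarith [this, show f t₀ + c * (t - t₀) = (f t₀ - c * t₀) + c * t by ring]
  have key : algebraMap ℝ B (f t₀ - c * t₀) + c • b ≤ φ (cfc f a) := by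
    have h1 := hφ_mono _ _ hgle
    rwa [hga, map_add, hφ_alg, hφ_rsmul] at h1
  -- character positivity
  have hχ_pos : ∀ y : B, 0 ≤ y → 0 ≤ χ y := fun y hy =>
    spectrum_nonneg_of_nonneg hy (WeakDual.CharacterSpace.mem_spectrum_iff_exists.mpr ⟨χ, rfl⟩)
  have hχ_key : ((f t₀ : ℝ) : ℂ) ≤ χ (φ (cfc f a)) := by
    have h2 := hχ_pos _ (sub_nonneg.mpr key)
    rw [map_sub, sub_nonneg, map_add] at h2
    have h3 : χ (algebraMap ℝ B (f t₀ - c * t₀)) = ((f t₀ - c * t₀ : ℝ) : ℂ) := by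
      rw [IsScalarTower.algebraMap_apply ℝ ℂ B, AlgHomClass.commutes]
      rfl
    have h4 : χ (c • b) = (c : ℂ) * ((t₀ : ℝ) : ℂ) := by
      rw [← IsScalarTower.algebraMap_smul ℂ c b, map_smul, ← hχb_re]
      rfl
    rw [h3, h4] at h2
    refine le_trans (le_of_eq ?_) h2
    push_cast
    ring
  -- character evaluation of cfc f b
  have hχ_cfc : χ (cfc f b) = ((f t₀ : ℝ) : ℂ) := by
    have h5 : χ (cfc f b) = cfc f (χ b) :=
      StarAlgHomClass.map_cfc (S := ℂ) χ f b hfb_cont (map_continuous χ) hb (hb.map χ)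
    rw [h5, hχb_re, show ((t₀ : ℝ) : ℂ) = algebraMap ℝ ℂ t₀ from rfl, cfc_algebraMap]
    rfl
  -- conclude
  have hfinal : (0 : ℂ) ≤ (x : ℂ) := by
    rw [← hχ, map_sub, hχ_cfc]
    rw [sub_nonneg]
    exact hχ_key
  exact Complex.zero_le_real.mp hfinal
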